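/- arXiv:math/0603386 — 3 statements merged into one kernel-verified Lean document; each statement's English description precedes it below -/
import Mathlib

section
/- Let R be a commutative ℚ-algebra, A an associative unital R-algebra, C a maximal commutative R-subalgebra of A, and M an A-bimodule symmetric over R. Then the differential hull D^C M := ⋃_{p ≥ 0} F^C_p M is stable under left and right multiplication by elements of the differential hull D^C A := ⋃_{p ≥ 0} F^C_p A; i.e., for a ∈ D^C A and m ∈ D^C M, both a·m and m·a lie in D^C M. -/
variable {R A M : Type*} [CommRing R] [Algebra ℚ R] [Ring A] [Algebra R A]
  [AddCommGroup M] [Module A M] [Module Aᵐᵒᵖ M] [SMulCommClass A Aᵐᵒᵖ M]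
  [Module R M] [IsScalarTower R A M] [IsScalarTower R Aᵐᵒᵖ M]

/-- `ad_a(m) = a·m − m·a` on the bimodule `M`. -/
def adM (a : A) (m : M) : M := a • m - MulOpposite.op a • m

/-- `ad_c(a) = ca − ac` on the algebra `A`. -/
def adA (c a : A) : A := c * a - a * c

/-!
For each `c`, `ad_c` satisfies the Leibniz rule `ad_c (a·m) = ad_c a · m + a · ad_c m`, and likewise
for `m·a`. Expanding `ad_c^{p+q+1} (a·m)` by this rule, every term carries either at least `p + 1`
copies of `ad_c` on `a` or at least `q + 1` on `m`, so it vanishes once `ad_c^{p+1} a = 0` and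
`ad_c^{q+1} m = 0`.
-/

section Leibniz

variable {α β γ : Type*} [Zero α] [Zero β] [AddMonoid γ]

theorem iterate_apply_eq_zero_of_leibniz (D : γ →+ γ) (δ : α → α) (E : β → β)
    (μ : α → β → γ) (hμ_zero_left : ∀ y, μ 0 y = 0) (hμ_zero_right : ∀ x, μ x 0 = 0)
    (hD : ∀ x y, D (μ x y) = μ (δ x) y + μ x (E y)) {p q : ℕ} {x : α} {y : β}
    (hx : δ^[p + 1] x = 0) (hy : E^[q + 1] y = 0) : D^[p + q + 1] (μ x y) = 0 := by
  induction hn : p + q generalizing p q x y with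
  | zero =>
    obtain ⟨rfl, rfl⟩ := Nat.add_eq_zero_iff.mp hn
    simp_all
  | succ n ih =>
    rw [Function.iterate_succ_apply, hD, iterate_map_add]
    have h_left : D^[n + 1] (μ (δ x) y) = 0 := by
      rcases p with _ | p
      · rw [show δ x = 0 from hx, hμ_zero_left, iterate_map_zero]
      · exact ih hx hy (by omega)
    have h_right : D^[n + 1] (μ x (E y)) = 0 := by
      rcases q with _ | q
      · rw [show E y = 0 from hy, hμ_zero_right, iterate_map_zero]
      · exact ih (q := q) hx hy (by omega)
    rw [h_left, h_right, add_zero]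

end Leibniz

def adMHom (c : A) : M →+ M :=
  AddMonoidHom.mk' (adM c) fun x y ↦ by
    simp only [adM, smul_add]
    abel

theorem adM_smul (c a : A) (m : M) : adM c (a • m) = adA c a • m + a • adM c m := by
  simp only [adM, adA, sub_smul, mul_smul, smul_sub]
  rw [← smul_comm a (MulOpposite.op c) m]
  abel

theorem adM_op_smul (c a : A) (m : M) :
    adM c (MulOpposite.op a • m) =
      MulOpposite.op (adA c a) • m + MulOpposite.op a • adM c m := by
  simp only [adM, adA, MulOpposite.op_sub, MulOpposite.op_mul, sub_smul, mul_smul, smul_sub]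
  rw [smul_comm c (MulOpposite.op a) m]
  abel

theorem adM_iterate_smul_eq_zero {c a : A} {m : M} {p q : ℕ}
    (ha : (adA c)^[p + 1] a = 0) (hm : (adM c)^[q + 1] m = 0) :
    (adM c)^[p + q + 1] (a • m) = 0 :=
  iterate_apply_eq_zero_of_leibniz (adMHom c) (adA c) (adM c) (· • ·) (zero_smul A) smul_zero
    (adM_smul c) ha hm

theorem adM_iterate_op_smul_eq_zero {c a : A} {m : M} {p q : ℕ}
    (ha : (adA c)^[p + 1] a = 0) (hm : (adM c)^[q + 1] m = 0) :
    (adM c)^[p + q + 1] (MulOpposite.op a • m) = 0 :=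
  iterate_apply_eq_zero_of_leibniz (adMHom c) (adA c) (adM c) (fun a m ↦ MulOpposite.op a • m)
    (fun m ↦ by rw [MulOpposite.op_zero, zero_smul]) (fun _ ↦ smul_zero _)
    (adM_op_smul c) ha hm

theorem differentialHull_bimodule_stable_general (C : Subalgebra R A)
    (a : A) (ha : ∃ p : ℕ, ∀ c ∈ C, (adA c)^[p + 1] a = 0)
    (m : M) (hm : ∃ p : ℕ, ∀ c ∈ C, (adM c)^[p + 1] m = 0) :
    (∃ p : ℕ, ∀ c ∈ C, (adM c)^[p + 1] (a • m) = 0) ∧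
    (∃ p : ℕ, ∀ c ∈ C, (adM c)^[p + 1] (MulOpposite.op a • m) = 0) := by
  obtain ⟨p, ha⟩ := ha
  obtain ⟨q, hm⟩ := hm
  exact ⟨⟨p + q, fun c hc ↦ adM_iterate_smul_eq_zero (ha c hc) (hm c hc)⟩,
    ⟨p + q, fun c hc ↦ adM_iterate_op_smul_eq_zero (ha c hc) (hm c hc)⟩⟩

theorem differentialHull_bimodule_stable (C : Subalgebra R A)
    (hC : ∀ x ∈ C, ∀ y ∈ C, x * y = y * x)
    (hmax : ∀ a : A, (∀ c ∈ C, c * a = a * c) → a ∈ C)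
    (a : A) (ha : ∃ p : ℕ, ∀ c ∈ C, (adA c)^[p + 1] a = 0)
    (m : M) (hm : ∃ p : ℕ, ∀ c ∈ C, (adM c)^[p + 1] m = 0) :
    (∃ p : ℕ, ∀ c ∈ C, (adM c)^[p + 1] (a • m) = 0) ∧
    (∃ p : ℕ, ∀ c ∈ C, (adM c)^[p + 1] (MulOpposite.op a • m) = 0) :=
  differentialHull_bimodule_stable_general C a ha m hm
end

section
/- Let R be a commutative ℚ-algebra, A an associative unital R-algebra, and C a maximal commutative R-subalgebra of A. Let a ∈ F^C_p A with p ≥ 1. Then for all c, c', c_2, …, c_p ∈ C one has ad_{c c'}(ad_{c_2}(⋯ ad_{c_p}(a)⋯)) = c · ad_{c'}(ad_{c_2}(⋯ ad_{c_p}(a)⋯)) + c' · ad_{c}(ad_{c_2}(⋯ ad_{c_p}(a)⋯)); i.e., the principal symbol of a, as a symmetric p-linear form on C with values in C, is a derivation in each argument. -/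
/-!
The Leibniz rule `ad_{cc'} = c · ad_{c'} + ad_c · c'` holds in any ring, so the claim reduces to
`ad_{c'} ad_c ad_{c_2} ⋯ ad_{c_p} a = 0`, i.e. to the vanishing of a mixed `(p+1)`-fold adjoint.
This follows from `ad_e^{p+1} a = 0` for all `e ∈ C` by polarization: the adjoints of elements of
`C` commute, and `ad_{e + k c} = ad_e + k ad_c`, so expanding `(ad_e + k ad_c)^{m} x = 0` for
`k = 0, …, m` gives a Vandermonde system for the mixed terms, which is solvable because `A` is
torsion-free as a module over a `ℚ`-algebra.
-/

variable {R A : Type*} [CommRing R] [Algebra ℚ R] [Ring A] [Algebra R A]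

/-- Iterated adjoint `ad_{c_0}(ad_{c_1}(⋯ ad_{c_k}(a)⋯))` for a list `[c_0, …, c_k]`. -/
def adIterA : List A → A → A
  | [], a => a
  | c :: l, a => adA c (adIterA l a)

theorem Matrix.det_smul_eq_zero_of_forall_sum_smul_eq_zero {n K M : Type*} [Fintype n]
    [DecidableEq n] [CommRing K] [AddCommGroup M] [Module K M] (B : Matrix n n K) (v : n → M)
    (h : ∀ i, ∑ j, B i j • v j = 0) (i : n) : B.det • v i = 0 := by
  calc B.det • v i = ∑ j, (B.adjugate * B) i j • v j := by
        simp [Matrix.adjugate_mul, Matrix.one_apply]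
    _ = ∑ k, B.adjugate i k • ∑ j, B k j • v j := by
        simp only [Matrix.mul_apply, Finset.sum_smul, Finset.smul_sum, smul_smul]
        exact Finset.sum_comm
    _ = 0 := by simp [h]

theorem eq_zero_of_forall_sum_pow_smul_eq_zero {M : Type*} [AddCommGroup M] [IsAddTorsionFree M]
    {m : ℕ} (w : ℕ → M) (h : ∀ k ≤ m, ∑ j ∈ Finset.range (m + 1), k ^ j • w j = 0) :
    ∀ j ≤ m, w j = 0 := by
  intro j hj
  let V := Matrix.vandermonde fun i : Fin (m + 1) => (i : ℤ)
  have hV : V.det ≠ 0 := Matrix.det_vandermonde_ne_zero_iff.2 fun a b hab => by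
    simpa [Fin.ext_iff] using hab
  have hrows (k : Fin (m + 1)) : ∑ i, V k i • w i = 0 := by
    have hk := h k (by omega)
    rw [← Fin.sum_univ_eq_sum_range] at hk
    simpa only [V, Matrix.vandermonde_apply, ← Nat.cast_pow, natCast_zsmul] using hk
  exact zsmul_right_injective hV (by
    simpa using V.det_smul_eq_zero_of_forall_sum_smul_eq_zero (fun i => w i) hrows ⟨j, by omega⟩)

theorem Commute.pow_mul_pow_apply_eq_zero_of_forall_add_nsmul_pow_apply_eq_zero {M : Type*}
    [AddCommGroup M] [IsAddTorsionFree M] {S T : Module.End ℤ M} (hST : Commute S T) {m : ℕ}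
    {x : M} (h : ∀ k ≤ m, ((S + k • T) ^ m) x = 0) : ∀ j ≤ m, (T ^ j * S ^ (m - j)) x = 0 := by
  have hw := eq_zero_of_forall_sum_pow_smul_eq_zero
    (fun j => m.choose j • (T ^ j * S ^ (m - j)) x) fun k hk => by
      rw [← h k hk, add_comm S, (hST.symm.smul_left k).add_pow, LinearMap.sum_apply]
      refine Finset.sum_congr rfl fun j _ => ?_
      rw [smul_pow]
      simp only [Module.End.mul_apply, LinearMap.smul_apply, Module.End.natCast_apply, map_nsmul,
        smul_smul, mul_comm]
  intro j hj
  exact nsmul_right_injective (Nat.choose_pos hj).ne' (by simpa using hw j hj)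

theorem IsAddTorsionFree.of_algebra_rat (K M : Type*) [CommRing K] [Algebra ℚ K] [Ring M]
    [Algebra K M] : IsAddTorsionFree M :=
  letI : Module ℚ M := Module.compHom M (algebraMap ℚ K)
  .of_module_rat M

def adLin : A →ₗ[ℤ] Module.End ℤ A := LinearMap.mul ℤ A - (LinearMap.mul ℤ A).flip

theorem coe_adLin (c : A) : ⇑(adLin c) = adA c := rfl

theorem commute_adLin {c d : A} (h : Commute c d) : Commute (adLin c) (adLin d) :=
  LinearMap.ext fun a => by
    simp only [Module.End.mul_apply, coe_adLin, adA, mul_sub, sub_mul, mul_assoc, h.left_comm,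
      h.eq]
    abel

theorem adA_zero_right (c : A) : adA c 0 = 0 := by simp [adA]

theorem adA_mul_left (c c' b : A) : adA (c * c') b = c * adA c' b + adA c b * c' := by
  simp only [adA]
  noncomm_ring

theorem adA_iterate_eq_zero_of_le {e x : A} {m n : ℕ} (hx : (adA e)^[m] x = 0) (hmn : m ≤ n) :
    (adA e)^[n] x = 0 := by
  obtain ⟨d, rfl⟩ := Nat.exists_eq_add_of_le hmn
  rw [add_comm, Function.iterate_add_apply, hx, Function.iterate_fixed (adA_zero_right e)]

section Commutative

variable [IsAddTorsionFree A] (C : AddSubmonoid A) (hC : ∀ x ∈ C, ∀ y ∈ C, x * y = y * x)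
include hC

theorem adA_iterate_adA_eq_zero {q : ℕ} {x : A} (hx : ∀ e ∈ C, (adA e)^[q + 1] x = 0)
    {c e : A} (hc : c ∈ C) (he : e ∈ C) : (adA e)^[q] (adA c x) = 0 := by
  have hcomm := commute_adLin (hC c hc e he)
  have hpol := hcomm.pow_mul_pow_apply_eq_zero_of_forall_add_nsmul_pow_apply_eq_zero
    (m := q + 1) (x := x) fun k _ => by
      rw [← map_nsmul, ← map_add, Module.End.pow_apply]
      exact hx _ (C.add_mem hc (C.nsmul_mem he k))
  simpa [Module.End.pow_apply, coe_adLin] using hpol q (by omega)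

theorem adA_iterate_adIterA_eq_zero (l : List A) (hl : ∀ y ∈ l, y ∈ C) (q : ℕ) (x : A)
    (hx : ∀ e ∈ C, (adA e)^[q + l.length] x = 0) : ∀ e ∈ C, (adA e)^[q] (adIterA l x) = 0 := by
  induction l generalizing q with
  | nil => simpa [adIterA] using hx
  | cons d l ih =>
    simp only [List.forall_mem_cons] at hl
    exact fun e he => adA_iterate_adA_eq_zero C hC
      (ih hl.2 (q + 1) fun e he => by simpa [add_assoc, add_comm 1] using hx e he) hl.1 he

end Commutative

theorem principal_symbol_is_derivation_general (C : Subalgebra R A)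
    (hC : ∀ x ∈ C, ∀ y ∈ C, x * y = y * x)
    (p : ℕ) (a : A)
    (ha : ∀ c ∈ C, (adA c)^[p + 1] a = 0)
    (c c' : A) (hcC : c ∈ C) (hc'C : c' ∈ C)
    (cs : Fin (p - 1) → A) (hcs : ∀ i, cs i ∈ C) :
    adA (c * c') (adIterA (List.ofFn cs) a) =
      c * adA c' (adIterA (List.ofFn cs) a) +
        c' * adA c (adIterA (List.ofFn cs) a) := by
  have : IsAddTorsionFree A := .of_algebra_rat R A
  set b := adIterA (List.ofFn cs) a
  have hb : ∀ e ∈ C, (adA e)^[2] b = 0 :=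
    adA_iterate_adIterA_eq_zero C.toAddSubmonoid hC (List.ofFn cs) (by simpa using hcs) 2 a
      fun e he => adA_iterate_eq_zero_of_le (ha e he) (by rw [List.length_ofFn]; omega)
  have hcomm : adA c b * c' = c' * adA c b := by
    have h := adA_iterate_adA_eq_zero C.toAddSubmonoid hC (q := 1) hb hcC hc'C
    exact (sub_eq_zero.mp h).symm
  rw [adA_mul_left, hcomm]

theorem principal_symbol_is_derivation (C : Subalgebra R A)
    (hC : ∀ x ∈ C, ∀ y ∈ C, x * y = y * x)
    (hmax : ∀ a : A, (∀ c ∈ C, c * a = a * c) → a ∈ C)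
    (p : ℕ) (hp : 1 ≤ p) (a : A)
    (ha : ∀ c ∈ C, (adA c)^[p + 1] a = 0)
    (c c' : A) (hcC : c ∈ C) (hc'C : c' ∈ C)
    (cs : Fin (p - 1) → A) (hcs : ∀ i, cs i ∈ C) :
    adA (c * c') (adIterA (List.ofFn cs) a) =
      c * adA c' (adIterA (List.ofFn cs) a) +
        c' * adA c (adIterA (List.ofFn cs) a) :=
  principal_symbol_is_derivation_general C hC p a ha c c' hcC hc'C cs hcs
end

section
/- Let R be a commutative ℚ-algebra, A an associative unital R-algebra, and C a maximal commutative R-subalgebra of A. Then the set Def A := {f ∈ A[t] | for every p ≥ 0, the coefficient of t^p in f lies in F^C_p A} is an R-subalgebra of the polynomial ring A[t]. -/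
/- STATEMENT 14: Over a commutative `ℚ`-algebra `R`, with `C` maximal commutative in
`A`, the set `Def A = {f ∈ A[t] | coeff_p(f) ∈ F^C_p A for all p}` is an
`R`-subalgebra of the polynomial ring `A[t]`. -/

variable {R A : Type*} [CommRing R] [Algebra ℚ R] [Ring A] [Algebra R A]

lemma adA_add (c x y : A) : adA c (x + y) = adA c x + adA c y := by
  simp only [adA]; noncomm_ring

lemma adA_zero (c : A) : adA c (0 : A) = 0 := by simp [adA]

lemma iter_adA_zero (c : A) (m : ℕ) : (adA c)^[m] (0 : A) = 0 := by
  induction m with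
  | zero => rfl
  | succ m ih => rw [Function.iterate_succ_apply, adA_zero, ih]

lemma iter_adA_add (c : A) (m : ℕ) (x y : A) :
    (adA c)^[m] (x + y) = (adA c)^[m] x + (adA c)^[m] y := by
  induction m generalizing x y with
  | zero => rfl
  | succ m ih => rw [Function.iterate_succ_apply, adA_add, ih, Function.iterate_succ_apply, Function.iterate_succ_apply]

lemma iter_adA_sum {ι : Type*} (c : A) (m : ℕ) (s : Finset ι) (F : ι → A) :
    (adA c)^[m] (∑ x ∈ s, F x) = ∑ x ∈ s, (adA c)^[m] (F x) := by
  induction s using Finset.cons_induction with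
  | empty => simp [iter_adA_zero]
  | cons a s ha ih => rw [Finset.sum_cons, Finset.sum_cons, iter_adA_add, ih]

lemma adA_mul (c a b : A) : adA c (a * b) = adA c a * b + a * adA c b := by
  simp only [adA]; noncomm_ring

lemma adA_key (c : A) : ∀ n i j : ℕ, i + j ≤ n → ∀ a b : A,
    (adA c)^[i + 1] a = 0 → (adA c)^[j + 1] b = 0 →
    (adA c)^[n + 1] (a * b) = 0 := by
  intro n
  induction n with
  | zero =>
    intro i j hij a b ha hb
    obtain ⟨hi, hj⟩ := Nat.add_eq_zero.mp (Nat.le_zero.mp hij)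
    subst hi; subst hj
    rw [Function.iterate_one] at ha hb ⊢
    rw [adA_mul, ha, hb, zero_mul, mul_zero, add_zero]
  | succ n ih =>
    intro i j hij a b ha hb
    rw [Function.iterate_succ_apply, adA_mul, iter_adA_add]
    have h1 : (adA c)^[n + 1] (adA c a * b) = 0 := by
      cases i with
      | zero =>
          rw [Function.iterate_one] at ha
          rw [ha, zero_mul]; exact iter_adA_zero c _
      | succ i' =>
          rw [Function.iterate_succ_apply] at ha
          exact ih i' j (by omega) _ _ ha hb
    have h2 : (adA c)^[n + 1] (a * adA c b) = 0 := by
      cases j with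
      | zero =>
          rw [Function.iterate_one] at hb
          rw [hb, mul_zero]; exact iter_adA_zero c _
      | succ j' =>
          rw [Function.iterate_succ_apply] at hb
          exact ih i j' (by omega) _ _ ha hb
    rw [h1, h2, add_zero]

theorem rees_deformation_isSubalgebra (C : Subalgebra R A)
    (hC : ∀ x ∈ C, ∀ y ∈ C, x * y = y * x)
    (hmax : ∀ a : A, (∀ c ∈ C, c * a = a * c) → a ∈ C) :
    ∃ D : Subalgebra R (Polynomial A),
      (D : Set (Polynomial A)) =
        {f : Polynomial A | ∀ p : ℕ, ∀ c ∈ C, (adA c)^[p + 1] (f.coeff p) = 0} := by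
  refine ⟨
    { carrier := {f : Polynomial A | ∀ p : ℕ, ∀ c ∈ C, (adA c)^[p + 1] (f.coeff p) = 0}
      zero_mem' := by
        intro p c hc; rw [Polynomial.coeff_zero]; exact iter_adA_zero c _
      one_mem' := by
        intro p c hc
        rcases Nat.eq_zero_or_pos p with hp | hp
        · subst hp
          rw [Polynomial.coeff_one_zero, Function.iterate_one]
          simp [adA]
        · rw [Polynomial.coeff_one, if_neg (by omega)]
          exact iter_adA_zero c _
      add_mem' := by
        intro f g hf hg p c hc
        rw [Polynomial.coeff_add, iter_adA_add, hf p c hc, hg p c hc, add_zero]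
      mul_mem' := by
        intro f g hf hg p c hc
        rw [Polynomial.coeff_mul, iter_adA_sum]
        refine Finset.sum_eq_zero fun x hx => ?_
        have hxy : x.1 + x.2 = p := Finset.HasAntidiagonal.mem_antidiagonal.mp hx
        exact adA_key c p x.1 x.2 (by omega) _ _ (hf x.1 c hc) (hg x.2 c hc)
      algebraMap_mem' := by
        intro r p c hc
        have h : (algebraMap R (Polynomial A)) r = Polynomial.C (algebraMap R A r) := by
          simp [Polynomial.algebraMap_apply]
        rw [h, Polynomial.coeff_C]
        rcases Nat.eq_zero_or_pos p with hp | hp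
        · subst hp
          rw [if_pos rfl, Function.iterate_one]
          simp [adA, Algebra.commutes]
        · rw [if_neg (by omega)]
          exact iter_adA_zero c _ }, rfl⟩
end
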